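/- The family F̂⁺ is admissible, where for 0 ≤ n ≤ 2, F̂⁺_n(r) is the coefficient of z^{−r} in the Laurent polynomial (z − z^{−1})^{2−n}, and for n ≥ 3, F̂⁺_n(r) is the coefficient of z^{−r} in (∑_{i≥0} z^{−(2i+1)})^{n−2}. -/

import Mathlib

/-!
Put `w = z⁻¹`. Then `F̂⁺_n(r)` is the coefficient of `w^r` in `(w⁻¹ - w)^(2-n)` for `n ≤ 2`, and
in `S^(n-2)` for `n ≥ 2`, where `S = ∑ w^(2i+1)` satisfies `(1 - w²) S = w`, i.e. `(w⁻¹ - w) S = 1`.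
Multiplying a series by `w⁻¹ - w = z - z⁻¹` turns its coefficient sequence `f` into
`r ↦ f(r+1) - f(r-1)`, and it sends the series of index `n` to the one of index `n - 1`:
this is (A2). (A1) is the coefficient sequence of `(w⁻¹ - w)⁰ = 1`.
-/

/-- A family of functions `F : ℕ → ℤ → ℚ` is admissible if
(A1) `F 2 0 = 1` and `F 2 r = 0` for `r ≠ 0`, and
(A2) for all `n ≥ 1` and `r ∈ ℤ`, `F n (r+1) - F n (r-1) = F (n-1) r`. -/
def Admissible (F : ℕ → ℤ → ℚ) : Prop :=
  (F 2 0 = 1 ∧ ∀ r : ℤ, r ≠ 0 → F 2 r = 0) ∧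
  (∀ n : ℕ, 1 ≤ n → ∀ r : ℤ, F n (r + 1) - F n (r - 1) = F (n - 1) r)

/-- The coefficient of `z^{-r}` in the Laurent polynomial `(z - z⁻¹)^(2-n)` (for `n ≤ 2`). -/
noncomputable def lowCoeff (n : ℕ) (r : ℤ) : ℚ :=
  ((LaurentPolynomial.T 1 - LaurentPolynomial.T (-1) : LaurentPolynomial ℚ) ^ (2 - n)).coeff (-r)

/-- The power series `∑_{i ≥ 0} w^(2i+1)`, i.e. the expansion of `(w⁻¹ - w)⁻¹·(-1)`
used in the expansions of `(z - z⁻¹)⁻¹` for `|z| > 1` (with `w = z⁻¹`) and `|z| < 1`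
(with `w = z`, up to sign). -/
noncomputable def Sser : PowerSeries ℚ := PowerSeries.mk fun i => if Odd i then 1 else 0

/-- `F̂⁺_n(r)`: for `n ≤ 2`, the coefficient of `z^{-r}` in `(z - z⁻¹)^(2-n)`;
for `n ≥ 3`, the coefficient of `z^{-r}` in `(∑_{i ≥ 0} z^{-(2i+1)})^(n-2)`,
which equals the coefficient of `w^r` in `Sser^(n-2)` (and `0` for `r < 0`). -/
noncomputable def Fhatplus (n : ℕ) (r : ℤ) : ℚ :=
  if n ≤ 2 then lowCoeff n r
  else if 0 ≤ r then PowerSeries.coeff r.toNat (Sser ^ (n - 2)) else 0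

/-- `F̂⁻_n(r)`: for `n ≤ 2`, the coefficient of `z^{-r}` in `(z - z⁻¹)^(2-n)`;
for `n ≥ 3`, the coefficient of `z^{-r}` in `(-∑_{i ≥ 0} z^(2i+1))^(n-2)`,
which equals the coefficient of `z^{-r}` in `(-Sser)^(n-2)` (and `0` for `r > 0`). -/
noncomputable def Fhatminus (n : ℕ) (r : ℤ) : ℚ :=
  if n ≤ 2 then lowCoeff n r
  else if r ≤ 0 then PowerSeries.coeff (-r).toNat ((-Sser) ^ (n - 2)) else 0

/-- `F̂_n(r)`: the average of `F̂⁺_n(r)` and `F̂⁻_n(r)`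
(for `n ≤ 2` both are the coefficient of `z^{-r}` in `(z - z⁻¹)^(2-n)`). -/
noncomputable def Fhat (n : ℕ) (r : ℤ) : ℚ := (Fhatplus n r + Fhatminus n r) / 2


open PowerSeries LaurentPolynomial

namespace PowerSeries

variable {R : Type*} [Ring R]

noncomputable def intCoeff (q : R⟦X⟧) (r : ℤ) : R :=
  if 0 ≤ r then coeff r.toNat q else 0

lemma intCoeff_natCast (q : R⟦X⟧) (n : ℕ) : q.intCoeff n = coeff n q := by
  simp [intCoeff]

lemma intCoeff_of_neg (q : R⟦X⟧) {r : ℤ} (hr : r < 0) : q.intCoeff r = 0 :=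
  if_neg hr.not_ge

lemma intCoeff_one (r : ℤ) : (1 : R⟦X⟧).intCoeff r = if r = 0 then 1 else 0 := by
  rcases lt_or_ge r 0 with hr | hr
  · rw [intCoeff_of_neg _ hr, if_neg hr.ne]
  · obtain ⟨n, rfl⟩ := Int.eq_ofNat_of_zero_le hr
    simp [intCoeff_natCast, coeff_one]

lemma intCoeff_add_one_sub_intCoeff_sub_one {p q : R⟦X⟧}
    (h : (1 - X ^ 2) * q = X * p) (r : ℤ) :
    q.intCoeff (r + 1) - q.intCoeff (r - 1) = p.intCoeff r := by
  have hcoeff (m : ℕ) :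
      coeff (m + 1) q - (if 1 ≤ m then coeff (m - 1) q else 0) = coeff m p := by
    rw [← coeff_succ_X_mul m p, ← h, sub_mul, one_mul, map_sub, coeff_X_pow_mul']
    simp
  rcases lt_trichotomy r (-1) with hr | rfl | hr
  · rw [intCoeff_of_neg _ (by omega), intCoeff_of_neg _ (by omega), intCoeff_of_neg _ (by omega),
      sub_zero]
  · have h0 : coeff 0 q = 0 := by simpa using congrArg (coeff 0) h
    rw [show (-1 + 1 : ℤ) = (0 : ℕ) by rfl, intCoeff_natCast, h0, intCoeff_of_neg _ (by omega),
      intCoeff_of_neg _ (by omega), sub_zero]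
  · obtain ⟨m, rfl⟩ : ∃ m : ℕ, r = m := ⟨r.toNat, by omega⟩
    rw [← Nat.cast_succ, intCoeff_natCast, intCoeff_natCast, ← hcoeff m]
    rcases m with _ | k
    · simp [intCoeff_of_neg]
    · simp [intCoeff_natCast]

end PowerSeries

lemma LaurentPolynomial.coeff_T_one_sub_T_neg_one_mul {R : Type*} [Ring R] (p : R[T;T⁻¹])
    (s : ℤ) :
    ((T 1 - T (-1)) * p).coeff s = p.coeff (s - 1) - p.coeff (s + 1) := by
  rw [sub_mul, AddMonoidAlgebra.coeff_sub, Finsupp.sub_apply, T, T,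
    AddMonoidAlgebra.coeff_single_mul_apply, AddMonoidAlgebra.coeff_single_mul_apply, one_mul,
    one_mul, neg_neg, neg_add_eq_sub, add_comm]

lemma lowCoeff_two (r : ℤ) : lowCoeff 2 r = if r = 0 then 1 else 0 := by
  simp [lowCoeff, ← T_zero, eq_comm]

lemma lowCoeff_add_one_sub_lowCoeff_sub_one {n : ℕ} (hn1 : 1 ≤ n) (hn2 : n ≤ 2) (r : ℤ) :
    lowCoeff n (r + 1) - lowCoeff n (r - 1) = lowCoeff (n - 1) r := by
  rw [lowCoeff, lowCoeff, lowCoeff, show 2 - (n - 1) = 2 - n + 1 by omega, pow_succ',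
    coeff_T_one_sub_T_neg_one_mul]
  ring_nf

lemma one_sub_X_sq_mul_Sser : (1 - X ^ 2) * Sser = X := by
  ext n
  rw [sub_mul, one_mul, map_sub]
  rcases n with _ | _ | m
  · simp [Sser, coeff_X_pow_mul']
  · simp [Sser, coeff_X_pow_mul']
  · rw [show m + 1 + 1 = m + 2 by ring, coeff_X_pow_mul Sser 2 m]
    simp [Sser, coeff_X, Nat.odd_add]

lemma one_sub_X_sq_mul_Sser_pow_succ (k : ℕ) : (1 - X ^ 2) * Sser ^ (k + 1) = X * Sser ^ k := by
  rw [pow_succ' Sser, ← mul_assoc, one_sub_X_sq_mul_Sser]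

lemma Fhatplus_eq_intCoeff {n : ℕ} (hn : 2 ≤ n) (r : ℤ) :
    Fhatplus n r = (Sser ^ (n - 2)).intCoeff r := by
  rcases hn.eq_or_lt with rfl | hn
  · rw [Fhatplus, if_pos le_rfl, lowCoeff_two, Nat.sub_self, pow_zero, intCoeff_one]
  · exact if_neg (by omega)

/-- The family `F̂⁺` is admissible. -/
theorem Fhatplus_admissible : Admissible Fhatplus := by
  refine ⟨⟨?_, fun r hr => ?_⟩, fun n hn r => ?_⟩
  · rw [Fhatplus, if_pos le_rfl, lowCoeff_two, if_pos rfl]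
  · rw [Fhatplus, if_pos le_rfl, lowCoeff_two, if_neg hr]
  rcases le_or_gt n 2 with hn2 | hn2
  · simp only [Fhatplus, if_pos hn2, if_pos (n.sub_le 1 |>.trans hn2)]
    exact lowCoeff_add_one_sub_lowCoeff_sub_one hn hn2 r
  · obtain ⟨k, rfl⟩ : ∃ k, n = k + 3 := ⟨n - 3, by omega⟩
    rw [Fhatplus_eq_intCoeff (by omega), Fhatplus_eq_intCoeff (by omega),
      Fhatplus_eq_intCoeff (by omega), show k + 3 - 2 = k + 1 by omega,
      show k + 3 - 1 - 2 = k by omega]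
    exact intCoeff_add_one_sub_intCoeff_sub_one (one_sub_X_sq_mul_Sser_pow_succ k) r
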